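/- arXiv:2308.14019 — 7 statements merged into one kernel-verified Lean document; each statement's English description precedes it below -/
import Mathlib

section
/- Let I be a matroidal ideal of degree d in R = K[x_1,...,x_n] with gcd of its generators equal to 1 and supp(I) = {x_1,...,x_n}. For each variable x_i, let A_i = {u ∈ G(I) : x_i divides u}. Then |A_i| ≥ d for every i. -/
open MvPolynomial

/-- The square-free monomial `∏_{i ∈ S} x_i`. -/
noncomputable def sqMon (K : Type*) [Field K] {n : ℕ} (S : Finset (Fin n)) :
    MvPolynomial (Fin n) K := ∏ i ∈ S, X i

/-- The square-free monomial ideal generated by the monomials with supports in `B`. -/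
noncomputable def matIdeal (K : Type*) [Field K] {n : ℕ} (B : Finset (Finset (Fin n))) :
    Ideal (MvPolynomial (Fin n) K) := Ideal.span (sqMon K '' ↑B)

/-- `B` is the set of bases (supports of the minimal generators) of a matroidal ideal of
degree `d`: all members have cardinality `d` and the matroid basis-exchange property holds
(this is the square-free case of the polymatroidal exchange property). -/
def IsMatroidalBases {n : ℕ} (d : ℕ) (B : Finset (Finset (Fin n))) : Prop :=
  B.Nonempty ∧ (∀ S ∈ B, S.card = d) ∧
    ∀ S ∈ B, ∀ T ∈ B, ∀ i ∈ S, i ∉ T → ∃ j ∈ T, j ∉ S ∧ insert j (S.erase i) ∈ B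

/-- The graded maximal ideal `(x_1, …, x_n)`. -/
noncomputable def maxIdeal (K : Type*) [Field K] (n : ℕ) : Ideal (MvPolynomial (Fin n) K) :=
  Ideal.span (Set.range X)

/-- `Ass(R/I^t)`. -/
noncomputable def AssPow (K : Type*) [Field K] {n : ℕ} (I : Ideal (MvPolynomial (Fin n) K))
    (t : ℕ) : Set (Ideal (MvPolynomial (Fin n) K)) :=
  associatedPrimes (MvPolynomial (Fin n) K) (MvPolynomial (Fin n) K ⧸ I ^ t)

/-- `p ∈ Ass^∞(I)`: `p` is an associated prime of all large powers of `I`. -/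
def memAssInfty (K : Type*) [Field K] {n : ℕ} (I p : Ideal (MvPolynomial (Fin n) K)) : Prop :=
  ∃ l, ∀ t, l ≤ t → p ∈ AssPow K I t

/-- `depth (R/I^t)`: the maximal length of a regular sequence on `R/I^t` consisting of
elements of the maximal ideal. -/
noncomputable def qDepth (K : Type*) [Field K] {n : ℕ} (I : Ideal (MvPolynomial (Fin n) K))
    (t : ℕ) : ℕ :=
  sSup {k | ∃ rs : List (MvPolynomial (Fin n) K), rs.length = k ∧
    (∀ r ∈ rs, r ∈ maxIdeal K n) ∧
    RingTheory.Sequence.IsRegular (MvPolynomial (Fin n) K ⧸ I ^ t) rs}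

/-- for a matroidal ideal of degree `d` with `gcd(I) = 1` and full support,
each variable `x_i` divides at least `d` of the minimal generators. -/
theorem stmt0 (K : Type*) [Field K] (n d : ℕ) (B : Finset (Finset (Fin n)))
    (hmat : IsMatroidalBases d B)
    (hsupp : ∀ i : Fin n, ∃ S ∈ B, i ∈ S)
    (hgcd : ∀ i : Fin n, ∃ S ∈ B, i ∉ S) :
    ∀ i : Fin n, d ≤ (B.filter (fun S => i ∈ S)).card := by
  classical
  intro i
  obtain ⟨hne, hcard, hex⟩ := hmat
  obtain ⟨S, hSB, hiS⟩ := hsupp i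
  have key : ∀ j, j ∈ S ∧ j ≠ i → ∃ T, T ∈ B ∧ i ∈ T ∧ j ∉ T ∧ S.erase j ⊆ T := by
    rintro j ⟨hjS, hji⟩
    obtain ⟨Q, hQB, hjQ⟩ := hgcd j
    obtain ⟨k, hkQ, hkS, hins⟩ := hex S hSB Q hQB j hjS hjQ
    refine ⟨insert k (S.erase j), hins, ?_, ?_, fun x hx => Finset.mem_insert_of_mem hx⟩
    · exact Finset.mem_insert_of_mem (Finset.mem_erase.mpr ⟨Ne.symm hji, hiS⟩)
    · intro hj
      rcases Finset.mem_insert.mp hj with h | h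
      · exact hkS (h ▸ hjS)
      · exact (Finset.mem_erase.mp h).1 rfl
  set g : Fin n → Finset (Fin n) := fun j =>
    if h : j ∈ S ∧ j ≠ i then (key j h).choose else S with hg
  have hgS : ∀ j (h : j ∈ S ∧ j ≠ i), g j ∈ B ∧ i ∈ g j ∧ j ∉ g j ∧ S.erase j ⊆ g j := by
    intro j h
    simp only [hg, dif_pos h]
    exact (key j h).choose_spec
  have hgi : ∀ j, ¬(j ∈ S ∧ j ≠ i) → g j = S := by
    intro j h; simp only [hg, dif_neg h]
  have hmaps : ∀ j ∈ S, g j ∈ B.filter (fun T => i ∈ T) := by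
    intro j hjS
    by_cases h : j ∈ S ∧ j ≠ i
    · obtain ⟨h1, h2, _⟩ := hgS j h
      exact Finset.mem_filter.mpr ⟨h1, h2⟩
    · rw [hgi j h]
      exact Finset.mem_filter.mpr ⟨hSB, hiS⟩
  have hinj : Set.InjOn g ↑S := by
    intro a ha b hb hab
    by_contra hne'
    simp only [Finset.mem_coe] at ha hb
    by_cases hai : a = i
    · have hb' : b ∈ S ∧ b ≠ i := ⟨hb, fun h => hne' (by rw [hai, h])⟩
      obtain ⟨_, _, hbn, _⟩ := hgS b hb'
      have : g a = S := hgi a (by rintro ⟨_, h⟩; exact h hai)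
      exact hbn (hab ▸ this ▸ hb)
    · have ha' : a ∈ S ∧ a ≠ i := ⟨ha, hai⟩
      obtain ⟨_, _, han, _⟩ := hgS a ha'
      by_cases hbi : b = i
      · have : g b = S := hgi b (by rintro ⟨_, h⟩; exact h hbi)
        exact han (by rw [hab, this]; exact ha)
      · have hb' : b ∈ S ∧ b ≠ i := ⟨hb, hbi⟩
        obtain ⟨h1, _, hbn, hsub⟩ := hgS b hb'
        have : a ∈ g b := hsub (Finset.mem_erase.mpr ⟨hne', ha⟩)
        exact han (hab ▸ this)
  have := Finset.card_le_card_of_injOn g hmaps hinj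
  rwa [hcard S hSB] at this
end

section
/- Let G be a finite simple graph and let I be the matroidal ideal attached to the graphic matroid of G (generated by the monomials u_F = ∏_{e_i ∈ E(F)} x_i over all spanning forests F of G). If G is biconnected (equivalently, the maximal ideal m is in the stable set of associated primes of I), then the linear relation graph Γ of I is a complete graph on the edge-index set of G. -/
open MvPolynomial

/-- For a graph `G` whose edges are enumerated by `e : Fin n → Sym2 V`, the index set
`S ⊆ Fin n` is (the edge-index set of) a maximal spanning forest of `G`; since the graphs
considered here are connected, this means a spanning tree: the graph on the vertices of
`G` with edge set `e '' S` is connected and acyclic. -/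
def IsSpanningForestIdx {V : Type*} {n : ℕ} (e : Fin n → Sym2 V)
    (S : Finset (Fin n)) : Prop :=
  (SimpleGraph.fromEdgeSet (e '' ↑S)).Connected ∧
    (SimpleGraph.fromEdgeSet (e '' ↑S)).IsAcyclic

/-!
For distinct edges `x = e i` and `y = e j` it suffices to find spanning trees `T ∌ y` and
`T' = T - x + y`, because then `x_i u_{T'} = x_j u_T`. Such trees exist once `x` and `y` lie on a
common cycle, encoded below as a path `W` from `d` to `c` avoiding `y = s(c, d)` and containing `x`:
extend `W` to a spanning tree `T` of `G - y`; by uniqueness of paths in `T`, removing `x` separates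
`d` from `c`, so `T - x + y` is acyclic with as many edges as `T`, hence a tree.

In a biconnected graph every edge `s(b, z) ≠ y` at a vertex `b` of a cycle through `y` also lies
on a cycle through `y`: since `G - b` is connected, some path from `z` first meets the cycle at a vertex `w ≠ b`, and the
ear `b, z, …, w` replaces the arc of the cycle between `b` and `w`. Walking along `G - c` from `d`
to an end of `x` therefore carries a cycle through `y` to one through `x`; a first cycle through `y`
is closed by a path from `d` to `c` through a third vertex, avoiding `c` and then `d`.
-/

namespace SimpleGraph

variable {V : Type*} {G : SimpleGraph V}

namespace Walk

theorem isPath_append_iff {u v w : V} {p : G.Walk u v} {q : G.Walk v w} :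
    (p.append q).IsPath ↔ p.IsPath ∧ q.IsPath ∧ ∀ x ∈ p.support, x ∈ q.support → x = v := by
  have hv : v ∈ p.support := p.end_mem_support
  simp only [isPath_def, support_append]
  rw [← q.cons_tail_support, List.nodup_append, List.nodup_cons]
  simp only [List.mem_cons]
  constructor
  · rintro ⟨hp, hq, hdisj⟩
    refine ⟨hp, ⟨fun h => hdisj v hv v h rfl, hq⟩, fun x hx => ?_⟩
    rintro (rfl | h)
    · rfl
    · exact absurd rfl (hdisj x hx x h)
  · rintro ⟨hp, ⟨hvq, hq⟩, hdisj⟩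
    refine ⟨hp, hq, fun x hx y hy hxy => ?_⟩
    subst hxy
    obtain rfl := hdisj x hx (Or.inr hy)
    exact hvq hy

theorem IsPath.reroute_middle {u b w v : V} {W₁ : G.Walk u b} {W₂ : G.Walk b w}
    {W₃ : G.Walk w v} (hW : (W₁.append (W₂.append W₃)).IsPath) {Q : G.Walk b w}
    (hQ : Q.IsPath)
    (hQW : ∀ t ∈ Q.support, t ∈ (W₁.append (W₂.append W₃)).support → t = b ∨ t = w) :
    (W₁.append (Q.append W₃)).IsPath := by
  simp only [mem_support_append_iff] at hQW
  simp only [isPath_append_iff, mem_support_append_iff] at hW ⊢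
  obtain ⟨hW₁, ⟨hW₂, hW₃, h₂₃⟩, h₁⟩ := hW
  have hb₂ := W₂.start_mem_support
  have hw₂ := W₂.end_mem_support
  have hw₃ := W₃.start_mem_support
  refine ⟨hW₁, ⟨hQ, hW₃, fun t htQ ht₃ => ?_⟩, fun t ht₁ ht => ?_⟩
  · rcases hQW t htQ (Or.inr (Or.inr ht₃)) with rfl | rfl
    · exact h₂₃ t hb₂ ht₃
    · rfl
  · rcases ht with htQ | ht₃
    · rcases hQW t htQ (Or.inl ht₁) with rfl | rfl
      · rfl
      · exact h₁ t ht₁ (Or.inl hw₂)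
    · exact h₁ t ht₁ (Or.inr ht₃)

theorem IsPath.exists_reroute_of_mem_right {u b v w : V} {W₁ : G.Walk u b} {W₂ : G.Walk b v}
    (hW : (W₁.append W₂).IsPath) (hw : w ∈ W₂.support) {Q : G.Walk b w} (hQ : Q.IsPath)
    (hQW : ∀ t ∈ Q.support, t ∈ (W₁.append W₂).support → t = b ∨ t = w) :
    ∃ W' : G.Walk u v, W'.IsPath ∧
      (∀ e ∈ W'.edges, e ∈ (W₁.append W₂).edges ∨ e ∈ Q.edges) ∧ ∀ e ∈ Q.edges, e ∈ W'.edges := by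
  obtain ⟨W₂, W₃, -, -, rfl⟩ := hW.of_append_right.mem_support_iff_exists_append.mp hw
  refine ⟨W₁.append (Q.append W₃), hW.reroute_middle hQ hQW, fun e he => ?_, fun e he => ?_⟩
  · simp only [edges_append, List.mem_append] at he ⊢
    tauto
  · simp [he]

theorem IsPath.exists_reroute {u v b w : V} {W : G.Walk u v} (hW : W.IsPath)
    (hb : b ∈ W.support) (hw : w ∈ W.support) {Q : G.Walk b w} (hQ : Q.IsPath)
    (hQW : ∀ t ∈ Q.support, t ∈ W.support → t = b ∨ t = w) :
    ∃ W' : G.Walk u v, W'.IsPath ∧ (∀ e ∈ W'.edges, e ∈ W.edges ∨ e ∈ Q.edges) ∧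
      ∀ e ∈ Q.edges, e ∈ W'.edges := by
  obtain ⟨W₁, W₂, -, -, rfl⟩ := hW.mem_support_iff_exists_append.mp hb
  rcases (mem_support_append_iff _ _).mp hw with hw₁ | hw₂
  · have hWrev : (W₂.reverse.append W₁.reverse).IsPath := by
      simpa only [reverse_append] using hW.reverse
    obtain ⟨W', hW', hW'W, hQW'⟩ := hWrev.exists_reroute_of_mem_right
      (by simpa only [support_reverse, List.mem_reverse] using hw₁) hQ
      (by simpa only [support_reverse, List.mem_reverse, ← reverse_append] using hQW)
    refine ⟨W'.reverse, hW'.reverse, fun e he => ?_, fun e he => ?_⟩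
    · rw [edges_reverse, List.mem_reverse] at he
      simpa only [← reverse_append, edges_reverse, List.mem_reverse] using hW'W e he
    · simpa only [edges_reverse, List.mem_reverse] using hQW' e he
  · exact hW.exists_reroute_of_mem_right hw₂ hQ hQW

theorem exists_isPath_first_mem {u v : V} (p : G.Walk u v) {S : Set V} (hv : v ∈ S) :
    ∃ w ∈ S, ∃ R : G.Walk u w, R.IsPath ∧ R.support ⊆ p.support ∧
      ∀ t ∈ R.support, t ∈ S → t = w := by
  classical
  suffices ∃ w ∈ S, ∃ R : G.Walk u w, R.support ⊆ p.support ∧ ∀ t ∈ R.support, t ∈ S → t = w by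
    obtain ⟨w, hw, R, hRp, hRS⟩ := this
    exact ⟨w, hw, R.bypass, R.bypass_isPath, List.Subset.trans R.support_bypass_subset_support hRp,
      fun t ht => hRS t (R.support_bypass_subset_support ht)⟩
  induction p with
  | nil => exact ⟨_, hv, nil, by simp, by simp⟩
  | @cons u _ _ h q ih =>
    by_cases hu : u ∈ S
    · exact ⟨u, hu, nil, by simp, by simp⟩
    obtain ⟨w, hw, R, hRq, hRS⟩ := ih hv
    refine ⟨w, hw, cons h R, ?_, ?_⟩
    · simpa using List.subset_cons_of_subset u hRq
    · simp only [support_cons, List.mem_cons, forall_eq_or_imp]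
      exact ⟨fun h => absurd h hu, hRS⟩

end Walk

theorem exists_walk_notMem_support_of_connected_induce {w : V}
    (h : (G.induce {t | t ≠ w}).Connected) {u v : V} (hu : u ≠ w) (hv : v ≠ w) :
    ∃ p : G.Walk u v, w ∉ p.support := by
  obtain ⟨q⟩ := h ⟨u, hu⟩ ⟨v, hv⟩
  refine ⟨q.map (Embedding.induce (G := G) _).toHom, fun hw => ?_⟩
  obtain ⟨⟨t, ht⟩, -, htw⟩ := List.mem_map.mp ((Walk.support_map _ q).symm ▸ hw)
  exact ht htw

section Biconnected

variable {c d : V}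

open Walk

theorem exists_isPath_mem_edges_of_mem_support
    (hcut : ∀ v : V, (G.induce {w | w ≠ v}).Connected) (hcd : c ≠ d)
    {W : G.Walk d c} (hW : W.IsPath) (hcdW : s(c, d) ∉ W.edges)
    {b z : V} (hb : b ∈ W.support) (hbz : G.Adj b z) (hne : s(b, z) ≠ s(c, d)) :
    ∃ W' : G.Walk d c, W'.IsPath ∧ s(c, d) ∉ W'.edges ∧ s(b, z) ∈ W'.edges := by
  obtain ⟨r, hrW, hrb⟩ : ∃ r ∈ W.support, r ≠ b := by
    by_cases hcb : c = b
    · exact ⟨d, W.start_mem_support, fun h => hcd (hcb.trans h.symm)⟩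
    · exact ⟨c, W.end_mem_support, hcb⟩
  obtain ⟨p, hbp⟩ := exists_walk_notMem_support_of_connected_induce (hcut b) hbz.ne' hrb
  obtain ⟨w, hwW, R, hR, hRp, hRW⟩ := p.exists_isPath_first_mem (S := {t | t ∈ W.support}) hrW
  have hQ : (cons hbz R).IsPath := hR.cons fun h => hbp (hRp h)
  obtain ⟨W', hW', hW'W, hQW'⟩ := hW.exists_reroute hb hwW hQ (by
    intro t ht htW
    rw [support_cons, List.mem_cons] at ht
    exact ht.imp id fun ht => hRW t ht htW)
  refine ⟨W', hW', fun h => ?_, hQW' _ (by simp)⟩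
  rcases hW'W _ h with h | h
  · exact hcdW h
  rw [edges_cons, List.mem_cons] at h
  rcases h with h | h
  · exact hne h.symm
  · exact hcd ((hRW c (R.fst_mem_support_of_mem_edges h) W.end_mem_support).trans
      (hRW d (R.snd_mem_support_of_mem_edges h) W.start_mem_support).symm)

theorem exists_isPath_mem_support_of_walk
    (hcut : ∀ v : V, (G.induce {w | w ≠ v}).Connected) (hcd : c ≠ d)
    {u a : V} (p : G.Walk u a) (hcp : c ∉ p.support)
    (hu : ∃ W : G.Walk d c, W.IsPath ∧ s(c, d) ∉ W.edges ∧ u ∈ W.support) :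
    ∃ W : G.Walk d c, W.IsPath ∧ s(c, d) ∉ W.edges ∧ a ∈ W.support := by
  induction p with
  | nil => exact hu
  | @cons u z a h q ih =>
    obtain ⟨W, hW, hcdW, huW⟩ := hu
    rw [support_cons, List.mem_cons, not_or] at hcp
    have hne : s(u, z) ≠ s(c, d) := by
      intro h'
      rcases Sym2.eq_iff.mp h' with ⟨rfl, -⟩ | ⟨-, rfl⟩
      · exact hcp.1 rfl
      · exact hcp.2 q.start_mem_support
    obtain ⟨W', hW', hcdW', hzW'⟩ :=
      exists_isPath_mem_edges_of_mem_support hcut hcd hW hcdW huW h hne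
    exact ih hcp.2 ⟨W', hW', hcdW', W'.snd_mem_support_of_mem_edges hzW'⟩

theorem exists_isPath_mem_edges (hcut : ∀ v : V, (G.induce {w | w ≠ v}).Connected)
    {a b : V} (hab : G.Adj a b) (hcd : G.Adj c d) (hne : s(a, b) ≠ s(c, d)) :
    ∃ W : G.Walk d c, W.IsPath ∧ s(c, d) ∉ W.edges ∧ s(a, b) ∈ W.edges := by
  classical
  wlog hac : a ≠ c generalizing a b
  · rw [not_not] at hac
    subst hac
    obtain ⟨W, hW, hcdW, hbaW⟩ := this hab.symm (by rwa [Sym2.eq_swap]) hab.ne'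
    exact ⟨W, hW, hcdW, Sym2.eq_swap ▸ hbaW⟩
  obtain ⟨t, htc, htd⟩ : ∃ t, t ≠ c ∧ t ≠ d := by
    by_cases had : a = d
    · subst had
      exact ⟨b, fun hbc => hne (by rw [hbc, Sym2.eq_swap]), hab.ne'⟩
    · exact ⟨a, hac, had⟩
  obtain ⟨p, hcp⟩ := exists_walk_notMem_support_of_connected_induce (hcut c) hcd.ne' htc
  obtain ⟨q, hdq⟩ := exists_walk_notMem_support_of_connected_induce (hcut d) htd hcd.ne
  have hbase : ∃ W : G.Walk d c, W.IsPath ∧ s(c, d) ∉ W.edges ∧ d ∈ W.support := by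
    refine ⟨(p.append q).bypass, bypass_isPath _, fun h => ?_, start_mem_support _⟩
    rcases List.mem_append.mp (edges_append p q ▸ edges_bypass_subset_edges _ h) with h | h
    · exact hcp (p.fst_mem_support_of_mem_edges h)
    · exact hdq (q.snd_mem_support_of_mem_edges h)
  obtain ⟨r, hcr⟩ := exists_walk_notMem_support_of_connected_induce (hcut c) hcd.ne' hac
  obtain ⟨W, hW, hcdW, haW⟩ := exists_isPath_mem_support_of_walk hcut hcd.ne r hcr hbase
  exact exists_isPath_mem_edges_of_mem_support hcut hcd.ne hW hcdW haW hab hne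

end Biconnected

theorem IsAcyclic.isTree_of_card_edgeSet [Finite V] (hG : G.IsAcyclic)
    (hcard : Nat.card G.edgeSet + 1 = Nat.card V) : G.IsTree := by
  have : Nonempty V := (Nat.card_pos_iff.mp (by omega)).1
  obtain ⟨T, hGT, -, hT⟩ := connected_top.exists_isTree_le_of_le_of_isAcyclic le_top hG
  have hTcard := (isTree_iff_connected_and_card.mp hT).2
  simp only [Nat.card_coe_set_eq] at hcard hTcard
  rwa [edgeSet_inj.mp (Set.eq_of_subset_of_ncard_le (edgeSet_mono hGT) (by omega))]

theorem Walk.IsPath.isAcyclic_fromEdgeSet {u v : V} {p : G.Walk u v} (hp : p.IsPath) :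
    (fromEdgeSet {e | e ∈ p.edges}).IsAcyclic := by
  induction p with
  | nil => simp
  | @cons u v w h q ih =>
    rw [Walk.cons_isPath_iff] at hp
    have hsup : fromEdgeSet {e | e ∈ (Walk.cons h q).edges} =
        fromEdgeSet {e | e ∈ q.edges} ⊔ edge u v := by
      rw [edge, ← fromEdgeSet_union]
      congr 1
      ext e
      simp
    rw [hsup]
    refine (ih hp.1).sup_edge_of_not_reachable fun ⟨r⟩ => ?_
    cases r with
    | nil => exact h.ne rfl
    | cons hadj _ => exact hp.2 (q.fst_mem_support_of_mem_edges ((fromEdgeSet_adj _).mp hadj).1)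

theorem IsAcyclic.not_reachable_deleteEdges_of_mem_edges (hG : G.IsAcyclic) {u v a b : V}
    {W : G.Walk u v} (hW : W.IsPath) (hab : s(a, b) ∈ W.edges) :
    ¬(G.deleteEdges {s(a, b)}).Reachable u v := by
  classical
  rw [reachable_deleteEdges_iff_exists_walk]
  rintro ⟨p, hp⟩
  have := hG.subsingleton_path u v
  have hpW : p.bypass = W :=
    congrArg Subtype.val (Subsingleton.elim ⟨p.bypass, p.bypass_isPath⟩ ⟨W, hW⟩)
  exact hp (p.edges_bypass_subset_edges (hpW ▸ hab))

theorem IsTree.deleteEdges_sup_edge [Finite V] (hG : G.IsTree) {a b c d : V}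
    (hab : s(a, b) ∈ G.edgeSet) (hcd : c ≠ d)
    (hsep : ¬(G.deleteEdges {s(a, b)}).Reachable c d) :
    (G.deleteEdges {s(a, b)} ⊔ edge c d).IsTree := by
  have hcdG : s(c, d) ∉ G.edgeSet \ {s(a, b)} := fun h =>
    hsep (Adj.reachable (by rwa [← mem_edgeSet, edgeSet_deleteEdges]))
  refine ((hG.isAcyclic.anti (deleteEdges_le _)).sup_edge_of_not_reachable
    hsep).isTree_of_card_edgeSet ?_
  rw [← (isTree_iff_connected_and_card.mp hG).2]
  simp only [Nat.card_coe_set_eq, edgeSet_sup, edgeSet_deleteEdges, edgeSet_edge_of_ne hcd]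
  rw [Set.union_singleton, Set.ncard_insert_of_notMem hcdG, Set.ncard_sdiff_singleton_add_one hab]

theorem Connected.exists_isTree_exchange [Finite V] (hG : G.Connected) {c d : V}
    (hcd : G.Adj c d) {W : G.Walk d c} (hW : W.IsPath) (hcdW : s(c, d) ∉ W.edges)
    {x : Sym2 V} (hxW : x ∈ W.edges) :
    ∃ T T' : SimpleGraph V, T ≤ G ∧ T' ≤ G ∧ T.IsTree ∧ T'.IsTree ∧ s(c, d) ∉ T.edgeSet ∧
      x ∉ T'.edgeSet ∧ insert x T'.edgeSet = insert s(c, d) T.edgeSet := by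
  set G' := G.deleteEdges {s(c, d)}
  have hG' : G'.Connected := hG.connected_delete_edge_of_not_isBridge <| by
    rw [isBridge_iff_forall_walk_mem_edges, not_forall]
    exact ⟨W.reverse, by simpa using hcdW⟩
  have hWG' : {e | e ∈ W.edges} ⊆ G'.edgeSet := fun e he => by
    rw [edgeSet_deleteEdges]
    exact ⟨W.edges_subset_edgeSet he, fun h => hcdW (Set.mem_singleton_iff.mp h ▸ he)⟩
  obtain ⟨T, hWT, hTG', hT⟩ := hG'.exists_isTree_le_of_le_of_isAcyclic
    ((fromEdgeSet_le (G := G')).mpr (Set.sdiff_subset.trans hWG')) hW.isAcyclic_fromEdgeSet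
  have hWT : ∀ e ∈ W.edges, e ∈ T.edgeSet := fun e he => edgeSet_mono hWT <| by
    rw [edgeSet_fromEdgeSet]
    exact ⟨he, G.not_isDiag_of_mem_edgeSet (W.edges_subset_edgeSet he)⟩
  have hTG : T ≤ G := hTG'.trans (deleteEdges_le _)
  have hcdT : s(c, d) ∉ T.edgeSet := fun h => by
    simpa [G', edgeSet_deleteEdges] using edgeSet_mono hTG' h
  induction x with | h a b =>
  have hxT : s(a, b) ∈ T.edgeSet := hWT _ hxW
  have hne : s(a, b) ≠ s(c, d) := fun h => hcdW (h ▸ hxW)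
  have hsep : ¬(T.deleteEdges {s(a, b)}).Reachable c d := fun h =>
    hT.isAcyclic.not_reachable_deleteEdges_of_mem_edges (hW.transfer hWT)
      (by rwa [Walk.edges_transfer]) h.symm
  have hT'edges : (T.deleteEdges {s(a, b)} ⊔ edge c d).edgeSet =
      insert s(c, d) (T.edgeSet \ {s(a, b)}) := by
    rw [edgeSet_sup, edgeSet_deleteEdges, edgeSet_edge_of_ne hcd.ne, Set.union_singleton]
  refine ⟨T, _, hTG,
    sup_le ((deleteEdges_le _).trans hTG) ((edge_le_iff (G := G)).mpr (Or.inr hcd)), hT,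
    hT.deleteEdges_sup_edge hxT hcd.ne hsep, hcdT, by simp [hT'edges, hne], ?_⟩
  rw [hT'edges, Set.insert_comm, Set.insert_sdiff_singleton, Set.insert_eq_of_mem hxT]

end SimpleGraph

section Indices

variable {V : Type*} {G : SimpleGraph V} {n : ℕ} {e : Fin n → Sym2 V}

theorem X_mul_sqMon_eq_of_insert_eq (K : Type*) [Field K] {i j : Fin n} {S T : Finset (Fin n)}
    (hiS : i ∉ S) (hjT : j ∉ T) (h : insert i S = insert j T) :
    X i * sqMon K S = X j * sqMon K T := by
  rw [sqMon, sqMon, ← Finset.prod_insert hiS, ← Finset.prod_insert hjT, h]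

theorem isSpanningForestIdx_of_isTree (hrange : Set.range e = G.edgeSet) {T : SimpleGraph V}
    (hTG : T ≤ G) (hT : T.IsTree) {S : Finset (Fin n)} (hS : ∀ k, k ∈ S ↔ e k ∈ T.edgeSet) :
    IsSpanningForestIdx e S := by
  have hST : e '' S = T.edgeSet := by
    ext z
    refine ⟨?_, fun hz => ?_⟩
    · rintro ⟨k, hk, rfl⟩
      exact (hS k).mp hk
    · obtain ⟨k, rfl⟩ : z ∈ Set.range e := hrange ▸ SimpleGraph.edgeSet_mono hTG hz
      exact ⟨k, (hS k).mpr hz, rfl⟩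
  rw [IsSpanningForestIdx, hST, SimpleGraph.fromEdgeSet_edgeSet]
  exact ⟨hT.connected, hT.isAcyclic⟩

theorem exists_isSpanningForestIdx_X_mul_eq (K : Type*) [Field K]
    (he : Function.Injective e) (hrange : Set.range e = G.edgeSet) {i j : Fin n}
    {T T' : SimpleGraph V} (hTG : T ≤ G) (hT'G : T' ≤ G) (hT : T.IsTree) (hT' : T'.IsTree)
    (hjT : e j ∉ T.edgeSet) (hiT' : e i ∉ T'.edgeSet)
    (hins : insert (e i) T'.edgeSet = insert (e j) T.edgeSet) :
    ∃ S T : Finset (Fin n), IsSpanningForestIdx e S ∧ IsSpanningForestIdx e T ∧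
      X i * sqMon K S = X j * sqMon K T := by
  classical
  refine ⟨{k | e k ∈ T'.edgeSet}.toFinset, {k | e k ∈ T.edgeSet}.toFinset,
    isSpanningForestIdx_of_isTree hrange hT'G hT' (by simp),
    isSpanningForestIdx_of_isTree hrange hTG hT (by simp),
    X_mul_sqMon_eq_of_insert_eq K (by simpa) (by simpa) ?_⟩
  ext k
  simpa [he.eq_iff] using congrArg (e k ∈ ·) hins

end Indices

theorem stmt1_general (K : Type*) [Field K] {V : Type*} [Fintype V] (G : SimpleGraph V)
    (n : ℕ) (e : Fin n → Sym2 V) (he : Function.Injective e)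
    (hrange : Set.range e = G.edgeSet)
    (hconn : G.Connected) (hcut : ∀ v : V, (G.induce {w | w ≠ v}).Connected) :
    ∀ i j : Fin n, i ≠ j →
      ∃ S T : Finset (Fin n), IsSpanningForestIdx e S ∧ IsSpanningForestIdx e T ∧
        X i * sqMon K S = X j * sqMon K T := by
  intro i j hij
  obtain ⟨a, b, hx⟩ := Sym2.exists.mp ⟨e i, rfl⟩
  obtain ⟨c, d, hy⟩ := Sym2.exists.mp ⟨e j, rfl⟩
  have hadj : ∀ k, ∀ {u v : V}, e k = s(u, v) → G.Adj u v := fun k u v h => by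
    rw [← SimpleGraph.mem_edgeSet, ← h, ← hrange]
    exact Set.mem_range_self k
  obtain ⟨W, hW, hcdW, hxW⟩ :=
    SimpleGraph.exists_isPath_mem_edges hcut (hadj i hx) (hadj j hy) (hx ▸ hy ▸ he.ne hij)
  obtain ⟨T, T', hTG, hT'G, hT, hT', hjT, hiT', hins⟩ :=
    hconn.exists_isTree_exchange (hadj j hy) hW hcdW hxW
  exact exists_isSpanningForestIdx_X_mul_eq K he hrange hTG hT'G hT hT'
    (hy ▸ hjT) (hx ▸ hiT') (hx ▸ hy ▸ hins)

/-- let `G` be a finite graph with edges `e 0, …, e (n-1)` and let `I` be the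
matroidal ideal of the graphic matroid of `G`, generated by the monomials
`u_F = ∏_{e_i ∈ E(F)} x_i` for the spanning forests `F` of `G`. If `G` is biconnected
(connected with no cutpoint), then the linear relation graph `Γ` of `I` is the complete
graph on the edge-index set `{0, …, n-1}`: for all `i ≠ j` there are generators
`u_F, u_{F'}` of `I` with `x_i u_F = x_j u_{F'}`. -/
theorem stmt1 (K : Type*) [Field K] {V : Type*} [Fintype V] (G : SimpleGraph V)
    (n : ℕ) (e : Fin n → Sym2 V) (he : Function.Injective e)
    (hrange : Set.range e = G.edgeSet)
    (hconn : G.Connected) (hcut : ∀ v : V, (G.induce {w | w ≠ v}).Connected)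
    (I : Ideal (MvPolynomial (Fin n) K))
    (hI : I = Ideal.span (sqMon K '' {S : Finset (Fin n) | IsSpanningForestIdx e S})) :
    ∀ i j : Fin n, i ≠ j →
      ∃ S T : Finset (Fin n), IsSpanningForestIdx e S ∧ IsSpanningForestIdx e T ∧
        X i * sqMon K S = X j * sqMon K T :=
  stmt1_general K G n e he hrange hconn hcut
end

section
/- Let G be a biconnected finite graph. Then for any two distinct edges e_i, e_j of G there exists a spanning tree F of G containing e_i such that (E(F) \ {e_i}) ∪ {e_j} is again a spanning tree of G. -/
/-- `F` is (the edge set of) a spanning tree of `G`: a set of edges of `G` such that the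
graph on the vertex set of `G` with edge set `F` is a tree (connected and acyclic). -/
def IsSpanningTree {V : Type*} (G : SimpleGraph V) (F : Set (Sym2 V)) : Prop :=
  F ⊆ G.edgeSet ∧ (SimpleGraph.fromEdgeSet F).IsTree

/-!
Call `A` a connected split for the edge `ab` if `a ∈ A`, `b ∉ A` and both `A` and `Aᶜ` induce
connected subgraphs. A spanning forest of `G` without its `A`–`Aᶜ` edges has exactly the two
components `A` and `Aᶜ`, so adding any crossing edge to it gives a spanning tree. Hence it suffices
to find a connected split for `e₁ = ab` across which `e₂ = uv` also runs: then exchanging `e₁` for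
`e₂` is exchanging one crossing edge for another.

Starting from `A = {a}` (connected split because `G - a` is connected), a split can be grown one
vertex at a time as long as `Aᶜ ≠ {b}`: some `x ∈ Aᶜ \ {b}` adjacent to `A` keeps `Aᶜ \ {x}`
connected. Take such a candidate `x` whose component of `b` in `Aᶜ \ {x}` is largest. If some
vertex of `Aᶜ \ {x}` lay outside it, then, `G - x` being connected, the part of `Aᶜ \ {x}` not
reachable from `b` would have an edge to `A` at some `x'`; but `x'` is a candidate whose component
of `b` contains the old one and also `x`. A maximal connected split avoiding `u` and `v` thus
grows only by `u` or `v`, which separates them.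
-/

namespace SimpleGraph

variable {V : Type*} {G : SimpleGraph V}

lemma exists_adj_mem_diff_of_preconnected_induce {S T : Set V} (hS : (G.induce S).Preconnected)
    {u v : V} (hu : u ∈ S) (hv : v ∈ S) (huT : u ∈ T) (hvT : v ∉ T) :
    ∃ c ∈ S ∩ T, ∃ d ∈ S \ T, G.Adj c d := by
  obtain ⟨p⟩ := hS ⟨u, hu⟩ ⟨v, hv⟩
  obtain ⟨d, -, hc, hd⟩ := p.exists_boundary_dart (Subtype.val ⁻¹' T) huT hvT
  exact ⟨d.fst, ⟨d.fst.2, hc⟩, d.snd, ⟨d.snd.2, hd⟩, d.adj⟩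

def inducedComponent (G : SimpleGraph V) (S : Set V) (v : V) : Set V :=
  {w | ∃ p : G.Walk v w, ∀ z ∈ p.support, z ∈ S}

section inducedComponent

variable {S S' : Set V} {v c d : V}

lemma inducedComponent_subset : G.inducedComponent S v ⊆ S :=
  fun _ ⟨p, hp⟩ => hp _ p.end_mem_support

lemma mem_inducedComponent_self (hv : v ∈ S) : v ∈ G.inducedComponent S v :=
  ⟨.nil, by simpa using hv⟩

lemma mem_inducedComponent_of_adj (hc : c ∈ G.inducedComponent S v) (hd : d ∈ S)
    (hcd : G.Adj c d) : d ∈ G.inducedComponent S v := by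
  obtain ⟨p, hp⟩ := hc
  refine ⟨p.concat hcd, fun z hz => ?_⟩
  rw [Walk.support_concat, List.mem_append, List.mem_singleton] at hz
  exact hz.elim (hp z) (· ▸ hd)

lemma inducedComponent_subset_inducedComponent (h : G.inducedComponent S v ⊆ S') :
    G.inducedComponent S v ⊆ G.inducedComponent S' v := by
  classical
  rintro w ⟨p, hp⟩
  exact ⟨p, fun z hz => h ⟨p.takeUntil z hz,
    fun y hy => hp y (p.support_takeUntil_subset_support hz hy)⟩⟩

lemma connected_induce_of_subset_inducedComponent (hv : v ∈ S)
    (h : S ⊆ G.inducedComponent S v) : (G.induce S).Connected :=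
  induce_connected_of_patches v hv fun hw => by
    obtain ⟨p, hp⟩ := h hw
    exact ⟨{z | z ∈ p.support}, hp, p.start_mem_support, p.end_mem_support,
      p.connected_induce_support.preconnected _ _⟩

end inducedComponent

section ConnectedSplit

variable {A : Set V} {a b x : V}

lemma exists_adj_of_connected_induce_ne (hcut : (G.induce {w | w ≠ x}).Connected)
    (ha : a ∈ A) (hx : x ∉ A) {w : V} (hw : w ∉ A) (hwx : w ≠ x) :
    ∃ c ∉ A, c ≠ x ∧ ∃ d ∈ A, G.Adj c d := by
  obtain ⟨c, ⟨hcx, hc⟩, d, ⟨-, hd⟩, hcd⟩ := exists_adj_mem_diff_of_preconnected_induce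
    (T := Aᶜ) hcut.preconnected (u := w) (v := a) hwx (fun h => hx (h ▸ ha)) hw (not_not.2 ha)
  exact ⟨c, hc, hcx, d, not_not.1 hd, hcd⟩

lemma exists_inducedComponent_ssubset (hcut : (G.induce {w | w ≠ x}).Connected)
    (hB : (G.induce Aᶜ).Connected) (ha : a ∈ A) (hb : b ∉ A) (hx : x ∉ A) (hxb : x ≠ b)
    {w : V} (hw : w ∈ Aᶜ \ {x}) (hwP : w ∉ G.inducedComponent (Aᶜ \ {x}) b) :
    ∃ x' ∉ A, x' ≠ b ∧ (∃ y ∈ A, G.Adj x' y) ∧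
      G.inducedComponent (Aᶜ \ {x}) b ⊂ G.inducedComponent (Aᶜ \ {x'}) b := by
  set P := G.inducedComponent (Aᶜ \ {x}) b
  have hbP : b ∈ P := mem_inducedComponent_self ⟨hb, hxb.symm⟩
  obtain ⟨c, ⟨hcx, hcB, hcP⟩, d, ⟨hdx, hdT⟩, hcd⟩ := exists_adj_mem_diff_of_preconnected_induce
    (T := (Aᶜ \ {x}) \ P) hcut.preconnected hw.2 (fun h => hx (h ▸ ha)) ⟨hw, hwP⟩
    (fun h => h.1.1 ha)
  have hdA : d ∈ A := by
    by_contra hdA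
    exact hdT ⟨⟨hdA, hdx⟩, fun hdP => hcP (mem_inducedComponent_of_adj hdP hcB hcd.symm)⟩
  have hPc : P ⊆ G.inducedComponent (Aᶜ \ {c}) b := inducedComponent_subset_inducedComponent
    fun z hz => ⟨(inducedComponent_subset hz).1, fun hzc => hcP (hzc ▸ hz)⟩
  obtain ⟨c', ⟨-, hc'P⟩, d', ⟨hd'B, hd'P⟩, hc'd'⟩ := exists_adj_mem_diff_of_preconnected_induce
    hB.preconnected hb hx hbP (fun h => (inducedComponent_subset h).2 rfl)
  have hd'x : d' = x := by
    by_contra hd'x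
    exact hd'P (mem_inducedComponent_of_adj hc'P ⟨hd'B, hd'x⟩ hc'd')
  subst hd'x
  refine ⟨c, hcB.1, fun h => hcP (h ▸ hbP), ⟨d, hdA, hcd⟩, ?_⟩
  rw [Set.ssubset_iff_of_subset hPc]
  exact ⟨d', mem_inducedComponent_of_adj (hPc hc'P) ⟨hx, fun h => hcB.2 h.symm⟩ hc'd', hd'P⟩

theorem exists_insert_connected_induce [Finite V] (hcut : ∀ v, (G.induce {w | w ≠ v}).Connected)
    (hA : (G.induce A).Connected) (hB : (G.induce Aᶜ).Connected) (hb : b ∉ A)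
    {w : V} (hw : w ∉ A) (hwb : w ≠ b) :
    ∃ x ∉ A, x ≠ b ∧ (G.induce (insert x A)).Connected ∧ (G.induce (insert x A)ᶜ).Connected := by
  obtain ⟨⟨a, ha⟩⟩ := hA.nonempty
  set X := {x | x ∉ A ∧ x ≠ b ∧ ∃ y ∈ A, G.Adj x y}
  have hX : X.Nonempty := by
    obtain ⟨x, hxA, hxb, hadj⟩ := exists_adj_of_connected_induce_ne (hcut b) ha hb hw hwb
    exact ⟨x, hxA, hxb, hadj⟩
  obtain ⟨x, ⟨hxA, hxb, y, hy, hxy⟩, hmax⟩ := Set.exists_max_image X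
    (fun x => (G.inducedComponent (Aᶜ \ {x}) b).ncard) (Set.toFinite X) hX
  have hconn : (G.induce (Aᶜ \ {x})).Connected := by
    refine connected_induce_of_subset_inducedComponent ⟨hb, hxb.symm⟩ fun w hw => ?_
    by_contra hwP
    obtain ⟨x', hx'A, hx'b, hx'adj, hlt⟩ :=
      exists_inducedComponent_ssubset (hcut x) hB ha hb hxA hxb hw hwP
    exact (hmax x' ⟨hx'A, hx'b, hx'adj⟩).not_gt (Set.ncard_lt_ncard hlt (Set.toFinite _))
  refine ⟨x, hxA, hxb, ?_, ?_⟩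
  · rw [Set.insert_eq]
    exact connected_induce_union (by simp [preconnected_top]) hA.preconnected rfl hy hxy
  · have hcompl : (insert x A)ᶜ = Aᶜ \ {x} := by
      ext z
      simp [and_comm]
    rwa [hcompl]

theorem exists_connected_split_separating [Finite V]
    (hcut : ∀ v, (G.induce {w | w ≠ v}).Connected) (hab : a ≠ b) {u v : V} (huv : u ≠ v) :
    ∃ A : Set V, a ∈ A ∧ b ∉ A ∧ (G.induce A).Connected ∧ (G.induce Aᶜ).Connected ∧
      (u ∈ A ↔ v ∉ A) := by
  have hsingle : (G.induce {a}).Connected ∧ (G.induce {a}ᶜ).Connected :=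
    ⟨by simp [connected_top], Set.compl_singleton_eq a ▸ hcut a⟩
  by_cases hua : u = a ∨ v = a
  · refine ⟨{a}, rfl, hab.symm, hsingle.1, hsingle.2, ?_⟩
    simp only [Set.mem_singleton_iff]
    rcases hua with rfl | rfl <;> simp [huv, huv.symm]
  obtain ⟨hua, hva⟩ := not_or.1 hua
  obtain ⟨A, hA⟩ := Set.toFinite {A : Set V | a ∈ A ∧ b ∉ A ∧ (G.induce A).Connected ∧
      (G.induce Aᶜ).Connected ∧ u ∉ A ∧ v ∉ A} |>.exists_maximal
    ⟨{a}, rfl, hab.symm, hsingle.1, hsingle.2, hua, hva⟩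
  obtain ⟨haA, hbA, hAconn, hBconn, huA, hvA⟩ := hA.prop
  obtain ⟨w, hwA, hwb⟩ : ∃ w ∉ A, w ≠ b := by
    by_cases hub : u = b
    · exact ⟨v, hvA, fun h => huv (hub.trans h.symm)⟩
    · exact ⟨u, huA, hub⟩
  obtain ⟨x, hxA, hxb, hA'conn, hB'conn⟩ :=
    exists_insert_connected_induce hcut hAconn hBconn hbA hwA hwb
  refine ⟨insert x A, .inr haA, by simp [hbA, hxb.symm], hA'conn, hB'conn, ?_⟩
  by_contra hsep
  have hux : u ≠ x := by rintro rfl; simp_all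
  have hvx : v ≠ x := by rintro rfl; simp_all
  exact hxA (hA.le_of_ge ⟨.inr haA, by simp [hbA, hxb.symm], hA'conn, hB'conn,
    by simp [hux, huA], by simp [hvx, hvA]⟩ (Set.subset_insert x A) (Set.mem_insert x A))

end ConnectedSplit

section SpanningTree

variable {A : Set V}

lemma exists_isAcyclic_reachable_iff_mem_iff (hA : (G.induce A).Preconnected)
    (hB : (G.induce Aᶜ).Preconnected) :
    ∃ F ≤ G, F.IsAcyclic ∧ ∀ x y, F.Reachable x y ↔ (x ∈ A ↔ y ∈ A) := by
  let H : SimpleGraph V :=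
    { Adj x y := G.Adj x y ∧ (x ∈ A ↔ y ∈ A)
      symm := ⟨fun _ _ h => ⟨h.1.symm, h.2.symm⟩⟩ }
  obtain ⟨F, hFH, hF, hFreach⟩ := H.exists_isAcyclic_reachable_eq_le
  refine ⟨F, hFH.trans fun _ _ h => h.1, hF, fun x y => ?_⟩
  rw [hFreach]
  constructor
  · rintro ⟨p⟩
    induction p with
    | nil => exact Iff.rfl
    | cons h _ ih => exact h.2.trans ih
  · intro hxy
    by_cases hx : x ∈ A
    · let f : G.induce A →g H := ⟨Subtype.val, fun {u v} h => ⟨h, iff_of_true u.2 v.2⟩⟩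
      exact (hA ⟨x, hx⟩ ⟨y, hxy.1 hx⟩).map f
    · let f : G.induce Aᶜ →g H := ⟨Subtype.val, fun {u v} h => ⟨h, iff_of_false u.2 v.2⟩⟩
      exact (hB ⟨x, hx⟩ ⟨y, mt hxy.2 hx⟩).map f

lemma isSpanningTree_edgeSet_union_singleton {F : SimpleGraph V} (hFG : F ≤ G)
    (hF : F.IsAcyclic) (hreach : ∀ x y, F.Reachable x y ↔ (x ∈ A ↔ y ∈ A)) {p q : V}
    (hpq : G.Adj p q) (hp : p ∈ A) (hq : q ∉ A) :
    IsSpanningTree G (F.edgeSet ∪ {s(p, q)}) := by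
  refine ⟨Set.union_subset (edgeSet_mono hFG) (by simpa using hpq), ?_⟩
  rw [fromEdgeSet_union, fromEdgeSet_edgeSet]
  have hpq' : (F ⊔ edge p q).Adj q p := Or.inr (by simp [edge_adj, hpq.ne'])
  have hto : ∀ z, (F ⊔ edge p q).Reachable z p := fun z => by
    by_cases hz : z ∈ A
    · exact ((hreach z p).2 (iff_of_true hz hp)).mono le_sup_left
    · exact (((hreach z q).2 (iff_of_false hz hq)).mono le_sup_left).trans hpq'.reachable
  have : Nonempty V := ⟨p⟩
  refine ⟨⟨fun x y => (hto x).trans (hto y).symm⟩, hF.sup_edge_of_not_reachable ?_⟩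
  rw [hreach]
  exact fun h => hq (h.1 hp)

end SpanningTree

end SimpleGraph

theorem stmt2_general {V : Type*} [Fintype V] (G : SimpleGraph V)
    (hcut : ∀ v : V, (G.induce {w | w ≠ v}).Connected)
    (e₁ e₂ : Sym2 V) (h₁ : e₁ ∈ G.edgeSet) (h₂ : e₂ ∈ G.edgeSet) :
    ∃ F : Set (Sym2 V), IsSpanningTree G F ∧ e₁ ∈ F ∧
      IsSpanningTree G ((F \ {e₁}) ∪ {e₂}) := by
  induction e₁ using Sym2.ind with | _ a b => ?_
  induction e₂ using Sym2.ind with | _ u v => ?_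
  obtain ⟨A, ha, hb, hA, hB, hsep⟩ :=
    SimpleGraph.exists_connected_split_separating hcut h₁.ne (G.ne_of_adj h₂)
  obtain ⟨F, hFG, hF, hreach⟩ :=
    SimpleGraph.exists_isAcyclic_reachable_iff_mem_iff hA.preconnected hB.preconnected
  have hab : s(a, b) ∉ F.edgeSet := fun h => hb (((hreach a b).1 h.reachable).1 ha)
  refine ⟨F.edgeSet ∪ {s(a, b)},
    SimpleGraph.isSpanningTree_edgeSet_union_singleton hFG hF hreach h₁ ha hb, by simp, ?_⟩
  rw [Set.union_sdiff_cancel_right (by simpa using hab)]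
  by_cases hu : u ∈ A
  · exact SimpleGraph.isSpanningTree_edgeSet_union_singleton hFG hF hreach h₂ hu (hsep.1 hu)
  · rw [Sym2.eq_swap]
    exact SimpleGraph.isSpanningTree_edgeSet_union_singleton hFG hF hreach h₂.symm
      (not_not.1 (mt hsep.2 hu)) hu

/-- if `G` is a biconnected finite graph (connected with no cutpoint), then
for any two distinct edges `e₁, e₂` of `G` there is a spanning tree `F` containing `e₁`
such that `(F \ {e₁}) ∪ {e₂}` is again a spanning tree of `G`. -/
theorem stmt2 {V : Type*} [Fintype V] (G : SimpleGraph V)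
    (hconn : G.Connected) (hcut : ∀ v : V, (G.induce {w | w ≠ v}).Connected)
    (e₁ e₂ : Sym2 V) (h₁ : e₁ ∈ G.edgeSet) (h₂ : e₂ ∈ G.edgeSet) (hne : e₁ ≠ e₂) :
    ∃ F : Set (Sym2 V), IsSpanningTree G F ∧ e₁ ∈ F ∧
      IsSpanningTree G ((F \ {e₁}) ∪ {e₂}) :=
  stmt2_general G hcut e₁ e₂ h₁ h₂
end

section
/- Let I be a matroidal ideal of degree d in R = K[x_1,...,x_n] with supp(I) = {x_1,...,x_n} and gcd(I)=1, and suppose m ∉ Ass^∞(I). Let Γ_1,...,Γ_s be the connected components of the linear relation graph Γ_I. Then I ⊆ I_1 ∩ ... ∩ I_s, where I_j is the square-free Veronese-type ideal of degree d_j generated by all square-free monomials of degree d_j in the variables indexed by V(Γ_j), and d = d_1 + ... + d_s. -/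
open MvPolynomial

/-- The linear relation graph `Γ_I` of the square-free monomial ideal with generator
supports `B`: `{i,j}` is an edge iff `x_i u = x_j v` for some generators `u, v`. -/
noncomputable def linRelGraph (K : Type*) [Field K] {n : ℕ}
    (B : Finset (Finset (Fin n))) : SimpleGraph (Fin n) where
  Adj i j := i ≠ j ∧ ∃ S ∈ B, ∃ T ∈ B, X i * sqMon K S = X j * sqMon K T
  symm := by
    refine ⟨?_⟩
    rintro i j ⟨hij, S, hS, T, hT, h⟩
    exact ⟨hij.symm, T, hT, S, hS, h.symm⟩
  loopless := by refine ⟨?_⟩; rintro i ⟨h, -⟩; exact h rfl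


open scoped Classical in

/-!
Along a basis exchange `S ↦ (S \ {i}) ∪ {j}` we have `x_i · u' = x_j · u`, so `i` and `j` are
adjacent in `Γ_I` and an exchange never changes how many elements of a basis lie in a given
connected component. Since any two bases are joined by a chain of exchanges, the number `d_c` of
elements of a basis in the component `c` does not depend on the basis; the `d_c` sum to `d`, and
each generator `u` is divisible by its part in `c`, a square-free monomial of degree `d_c`.
-/

open Finset

theorem Finset.card_filter_insert_erase {α : Type*} [DecidableEq α] (p : α → Prop)
    [DecidablePred p] {S : Finset α} {i j : α} (hi : i ∈ S) (hj : j ∉ S) (hpij : p i ↔ p j) :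
    #{x ∈ insert j (S.erase i) | p x} = #{x ∈ S | p x} := by
  rw [card_filter, card_filter, sum_insert (fun h => hj (mem_of_mem_erase h)),
    ← add_sum_erase S _ hi, if_congr hpij rfl rfl]

theorem IsMatroidalBases.card_filter_eq {n d : ℕ} {B : Finset (Finset (Fin n))}
    (hB : IsMatroidalBases d B) (p : Fin n → Prop) [DecidablePred p]
    (hp : ∀ S ∈ B, ∀ i ∈ S, ∀ j ∉ S, insert j (S.erase i) ∈ B → (p i ↔ p j))
    {S T : Finset (Fin n)} (hS : S ∈ B) (hT : T ∈ B) :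
    #{x ∈ S | p x} = #{x ∈ T | p x} := by
  induction hk : #(S \ T) using Nat.strong_induction_on generalizing S with
  | _ k ih =>
  obtain hST | ⟨i, hi⟩ := (S \ T).eq_empty_or_nonempty
  · rw [eq_of_subset_of_card_le (sdiff_eq_empty_iff_subset.mp hST)
      (by rw [hB.2.1 S hS, hB.2.1 T hT])]
  · obtain ⟨hiS, hiT⟩ := mem_sdiff.mp hi
    obtain ⟨j, hjT, hjS, hS'⟩ := hB.2.2 S hS T hT i hiS hiT
    rw [← card_filter_insert_erase p hiS hjS (hp S hS i hiS j hjS hS')]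
    refine ih _ ?_ hS' rfl
    rw [← hk, insert_sdiff_of_mem _ hjT, erase_sdiff_comm]
    exact card_erase_lt_of_mem hi

theorem sqMon_dvd_of_subset (K : Type*) [Field K] {n : ℕ} {S T : Finset (Fin n)} (h : S ⊆ T) :
    sqMon K S ∣ sqMon K T :=
  prod_dvd_prod_of_subset S T X h

theorem X_mul_sqMon_insert_erase (K : Type*) [Field K] {n : ℕ} {S : Finset (Fin n)}
    {i j : Fin n} (hi : i ∈ S) (hj : j ∉ S) :
    X i * sqMon K (insert j (S.erase i)) = X j * sqMon K S := by
  rw [sqMon, sqMon, prod_insert (fun h => hj (mem_of_mem_erase h)), ← mul_prod_erase S X hi]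
  ring

theorem linRelGraph_adj_of_exchange (K : Type*) [Field K] {n : ℕ} {B : Finset (Finset (Fin n))}
    {S : Finset (Fin n)} (hS : S ∈ B) {i j : Fin n} (hi : i ∈ S) (hj : j ∉ S)
    (hS' : insert j (S.erase i) ∈ B) : (linRelGraph K B).Adj i j :=
  ⟨by rintro rfl; exact hj hi, _, hS', S, hS, X_mul_sqMon_insert_erase K hi hj⟩

open scoped Classical in
theorem IsMatroidalBases.card_filter_connectedComponent_eq (K : Type*) [Field K] {n d : ℕ}
    {B : Finset (Finset (Fin n))} (hB : IsMatroidalBases d B)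
    (c : (linRelGraph K B).ConnectedComponent) {S T : Finset (Fin n)} (hS : S ∈ B)
    (hT : T ∈ B) :
    #{i ∈ S | (linRelGraph K B).connectedComponentMk i = c} =
      #{i ∈ T | (linRelGraph K B).connectedComponentMk i = c} :=
  hB.card_filter_eq _ (fun S hS i hi j hj hS' => by
    rw [SimpleGraph.ConnectedComponent.sound
      (linRelGraph_adj_of_exchange K hS hi hj hS').reachable]) hS hT

theorem stmt7_general (K : Type*) [Field K] (n d : ℕ) (B : Finset (Finset (Fin n)))
    (hmat : IsMatroidalBases d B) (I : Ideal (MvPolynomial (Fin n) K))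
    (hI : I = matIdeal K B) :
    ∃ dd : (linRelGraph K B).ConnectedComponent → ℕ,
      (∑ᶠ c, dd c) = d ∧
      ∀ c : (linRelGraph K B).ConnectedComponent,
        I ≤ Ideal.span (sqMon K ''
          {S : Finset (Fin n) | S.card = dd c ∧
            ∀ i ∈ S, (linRelGraph K B).connectedComponentMk i = c}) := by
  classical
  set G := linRelGraph K B
  have : Fintype G.ConnectedComponent := Fintype.ofFinite _
  obtain ⟨S₀, hS₀⟩ := hmat.1
  refine ⟨fun c => #{i ∈ S₀ | G.connectedComponentMk i = c}, ?_, fun c => ?_⟩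
  · rw [finsum_eq_sum_of_fintype, ← hmat.2.1 S₀ hS₀]
    exact (card_eq_sum_card_fiberwise fun _ _ => mem_coe.mpr (mem_univ _)).symm
  · rw [hI, matIdeal, Ideal.span_le]
    rintro _ ⟨T, hT, rfl⟩
    have hpart : sqMon K {i ∈ T | G.connectedComponentMk i = c} ∣ sqMon K T :=
      sqMon_dvd_of_subset K (filter_subset _ T)
    refine Ideal.mem_of_dvd _ hpart
      (Ideal.subset_span ⟨_, ⟨?_, fun i hi => (mem_filter.mp hi).2⟩, rfl⟩)
    exact hmat.card_filter_connectedComponent_eq K c hT hS₀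

/-- if `I` is a matroidal ideal of degree `d` with full support, `gcd(I) = 1`
and `m ∉ Ass^∞(I)`, then there are degrees `d_c` attached to the connected components `c`
of the linear relation graph `Γ_I`, summing to `d`, such that `I` is contained in each
square-free Veronese-type ideal of degree `d_c` in the variables of the component `c`. -/
theorem stmt7 (K : Type*) [Field K] (n d : ℕ) (B : Finset (Finset (Fin n)))
    (hmat : IsMatroidalBases d B) (I : Ideal (MvPolynomial (Fin n) K))
    (hI : I = matIdeal K B)
    (hsupp : ∀ i : Fin n, ∃ S ∈ B, i ∈ S)
    (hgcd : ∀ i : Fin n, ∃ S ∈ B, i ∉ S)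
    (hm : ¬ memAssInfty K I (maxIdeal K n)) :
    ∃ dd : (linRelGraph K B).ConnectedComponent → ℕ,
      (∑ᶠ c, dd c) = d ∧
      ∀ c : (linRelGraph K B).ConnectedComponent,
        I ≤ Ideal.span (sqMon K ''
          {S : Finset (Fin n) | S.card = dd c ∧
            ∀ i ∈ S, (linRelGraph K B).connectedComponentMk i = c}) :=
  stmt7_general K n d B hmat I hI
end

section
/- In R = K[x_1,...,x_8], let I be the square-free monomial ideal generated by the 44 degree-4 monomials: x1x2x3x4, x1x2x3x5, x1x2x3x6, x1x2x3x8, x1x2x4x7, x1x2x5x7, x1x2x6x7, x1x2x7x8, x1x3x4x7, x1x3x4x8, x1x3x5x7, x1x3x5x8, x1x3x6x7, x1x3x6x8, x1x3x7x8, x1x4x7x8, x1x5x7x8, x1x6x7x8, x2x3x4x5, x2x3x4x6, x2x3x4x7, x2x3x5x6, x2x3x5x7, x2x3x5x8, x2x3x6x7, x2x3x6x8, x2x3x7x8, x2x4x5x7, x2x4x6x7, x2x5x6x7, x2x5x7x8, x2x6x7x8, x3x4x5x7, x3x4x5x8, x3x4x6x7, x3x4x6x8, x3x4x7x8, x3x5x6x7,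 x3x5x6x8, x3x5x7x8, x3x6x7x8, x4x5x7x8, x4x6x7x8, x5x6x7x8. Then the colon ideal (I^2 : x1x2x3x5x6x7x8) equals the maximal ideal (x_1,...,x_8). -/
open MvPolynomial

/-- The 44 supports of the degree-4 generators of the ideal of the counterexample
(variables are 0-indexed: `x_{i+1}` corresponds to index `i`). -/
def exBases : Finset (Finset (Fin 8)) :=
  { {0, 1, 2, 3},
    {0, 1, 2, 4},
    {0, 1, 2, 5},
    {0, 1, 2, 7},
    {0, 1, 3, 6},
    {0, 1, 4, 6},
    {0, 1, 5, 6},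
    {0, 1, 6, 7},
    {0, 2, 3, 6},
    {0, 2, 3, 7},
    {0, 2, 4, 6},
    {0, 2, 4, 7},
    {0, 2, 5, 6},
    {0, 2, 5, 7},
    {0, 2, 6, 7},
    {0, 3, 6, 7},
    {0, 4, 6, 7},
    {0, 5, 6, 7},
    {1, 2, 3, 4},
    {1, 2, 3, 5},
    {1, 2, 3, 6},
    {1, 2, 4, 5},
    {1, 2, 4, 6},
    {1, 2, 4, 7},
    {1, 2, 5, 6},
    {1, 2, 5, 7},
    {1, 2, 6, 7},
    {1, 3, 4, 6},
    {1, 3, 5, 6},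
    {1, 4, 5, 6},
    {1, 4, 6, 7},
    {1, 5, 6, 7},
    {2, 3, 4, 6},
    {2, 3, 4, 7},
    {2, 3, 5, 6},
    {2, 3, 5, 7},
    {2, 3, 6, 7},
    {2, 4, 5, 6},
    {2, 4, 5, 7},
    {2, 4, 6, 7},
    {2, 5, 6, 7},
    {3, 4, 6, 7},
    {3, 5, 6, 7},
    {4, 5, 6, 7} }

/-! Each `xᵢ u` is a product of two generators of `I`, so `𝔪 ⊆ (I² : u)`. Conversely every
generator of `I` lies in `𝔪⁴`, hence `I² ⊆ 𝔪⁸`, while `u` has degree `7`; so `u ∉ I²` and the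
colon ideal is proper. Since `𝔪` is maximal, the two coincide. -/

section

variable {K : Type*} [Field K] {n : ℕ}

theorem sqMon_eq_monomial (S : Finset (Fin n)) :
    sqMon K S = monomial (∑ i ∈ S, Finsupp.single i 1) 1 := by
  rw [sqMon, monomial_sum_one]; rfl

theorem sqMon_mem_pow_maxIdeal_iff (S : Finset (Fin n)) (k : ℕ) :
    sqMon K S ∈ maxIdeal K n ^ k ↔ k ≤ S.card := by
  rw [sqMon_eq_monomial, maxIdeal, monomial_mem_pow_idealOfVars_iff _ _ one_ne_zero, map_sum]
  simp [Finsupp.degree_single]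

theorem maxIdeal_eq_ker_constantCoeff :
    maxIdeal K n = RingHom.ker (constantCoeff : MvPolynomial (Fin n) K →+* K) := by
  ext p
  rw [← pow_one (maxIdeal K n), maxIdeal, mem_pow_idealOfVars_iff', RingHom.mem_ker,
    constantCoeff_eq]
  simp [Finsupp.degree_eq_zero_iff]

theorem maxIdeal_isMaximal : (maxIdeal K n).IsMaximal := by
  rw [maxIdeal_eq_ker_constantCoeff]
  exact RingHom.ker_isMaximal_of_surjective _ fun a => ⟨C a, constantCoeff_C _ a⟩

theorem matIdeal_pow_le_pow_maxIdeal {B : Finset (Finset (Fin n))} {d : ℕ}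
    (hB : ∀ S ∈ B, d ≤ S.card) (t : ℕ) : matIdeal K B ^ t ≤ maxIdeal K n ^ (d * t) := by
  rw [pow_mul]
  refine Ideal.pow_right_mono ?_ t
  rw [matIdeal, Ideal.span_le]
  rintro _ ⟨S, hS, rfl⟩
  exact (sqMon_mem_pow_maxIdeal_iff S d).2 (hB S hS)

theorem sqMon_notMem_matIdeal_pow {B : Finset (Finset (Fin n))} {d t : ℕ}
    (hB : ∀ S ∈ B, d ≤ S.card) {U : Finset (Fin n)} (hU : U.card < d * t) :
    sqMon K U ∉ matIdeal K B ^ t := fun h =>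
  hU.not_ge ((sqMon_mem_pow_maxIdeal_iff U _).1 (matIdeal_pow_le_pow_maxIdeal hB t h))

/- The multiset condition covers both cases at once: `S ∩ T = {i}` with `S ∪ T = U` when
`i ∈ U`, and `S`, `T` disjoint with `S ∪ T = insert i U` when `i ∉ U`. -/
theorem X_mul_sqMon_eq {i : Fin n} {S T U : Finset (Fin n)}
    (h : S.val + T.val = i ::ₘ U.val) : X i * sqMon K U = sqMon K S * sqMon K T := by
  simp only [sqMon, Finset.prod_eq_multiset_prod, ← Multiset.prod_add, ← Multiset.map_add, h,
    Multiset.map_cons, Multiset.prod_cons]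

theorem maxIdeal_le_colon_matIdeal_sq {B : Finset (Finset (Fin n))} {U : Finset (Fin n)}
    (hcover : ∀ i, ∃ S ∈ B, ∃ T ∈ B, S.val + T.val = i ::ₘ U.val) :
    maxIdeal K n ≤ (matIdeal K B ^ 2).colon (Ideal.span {sqMon K U}) := by
  rw [maxIdeal, Ideal.span_le]
  rintro _ ⟨i, rfl⟩
  obtain ⟨S, hS, T, hT, hST⟩ := hcover i
  rw [SetLike.mem_coe, Ideal.mem_colon_span_singleton, X_mul_sqMon_eq hST, pow_two]
  exact Ideal.mul_mem_mul (Ideal.subset_span ⟨S, hS, rfl⟩) (Ideal.subset_span ⟨T, hT, rfl⟩)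

theorem colon_matIdeal_sq_eq_maxIdeal {B : Finset (Finset (Fin n))} {d : ℕ}
    (hB : ∀ S ∈ B, d ≤ S.card) {U : Finset (Fin n)} (hU : U.card < d * 2)
    (hcover : ∀ i, ∃ S ∈ B, ∃ T ∈ B, S.val + T.val = i ::ₘ U.val) :
    (matIdeal K B ^ 2).colon (Ideal.span {sqMon K U}) = maxIdeal K n := by
  have hproper : (matIdeal K B ^ 2).colon (Ideal.span {sqMon K U}) ≠ ⊤ := fun htop => by
    have hone := (Ideal.eq_top_iff_one _).1 htop
    rw [Ideal.mem_colon_span_singleton, one_mul] at hone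
    exact sqMon_notMem_matIdeal_pow hB hU hone
  exact (maxIdeal_isMaximal.eq_of_le hproper (maxIdeal_le_colon_matIdeal_sq hcover)).symm

end

set_option maxRecDepth 4000 in
/-- for the matroidal ideal `I` above,
`(I² : x₁x₂x₃x₅x₆x₇x₈) = (x₁, …, x₈)`. -/
theorem stmt13 (K : Type*) [Field K] (I : Ideal (MvPolynomial (Fin 8) K))
    (hI : I = matIdeal K exBases) :
    Submodule.colon (I ^ 2)
        (Ideal.span {sqMon K ({0, 1, 2, 4, 5, 6, 7} : Finset (Fin 8))}) =
      maxIdeal K 8 := by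
  subst hI
  refine colon_matIdeal_sq_eq_maxIdeal (d := 4) (by decide) (by decide) fun i => ?_
  fin_cases i
  exacts [⟨{0, 1, 2, 4}, by decide, {0, 5, 6, 7}, by decide, by decide⟩,
    ⟨{0, 1, 2, 4}, by decide, {1, 5, 6, 7}, by decide, by decide⟩,
    ⟨{0, 1, 2, 4}, by decide, {2, 5, 6, 7}, by decide, by decide⟩,
    ⟨{0, 1, 2, 3}, by decide, {4, 5, 6, 7}, by decide, by decide⟩,
    ⟨{0, 1, 2, 4}, by decide, {4, 5, 6, 7}, by decide, by decide⟩,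
    ⟨{0, 1, 2, 5}, by decide, {4, 5, 6, 7}, by decide, by decide⟩,
    ⟨{0, 1, 4, 6}, by decide, {2, 5, 6, 7}, by decide, by decide⟩,
    ⟨{0, 1, 2, 7}, by decide, {4, 5, 6, 7}, by decide, by decide⟩]
end

section
/- In R = K[x_1,...,x_6], let I = (x1x3, x1x4, x1x5, x1x6, x2x3, x2x4, x2x5, x2x6, x3x5, x3x6, x4x5, x4x6). Then (I^2 : x1x3x5) = (x_1,...,x_6); in particular the maximal ideal is an associated prime of I^2. -/
open MvPolynomial

/-!
`u = x₁x₃x₅` has degree 3 while `I²` is generated in degree 4, so `u ∉ I²`; on the other hand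
every `xᵢu` is a product of two generators of `I`. Hence `(I² : u)` is a proper ideal containing
the maximal ideal `(x₁, …, x₆)`, so it equals it, and a colon ideal that is prime is an associated
prime of `R/I²`.
-/

namespace MvPolynomial

variable {σ R : Type*}

theorem idealOfVars_eq_ker_constantCoeff [CommRing R] :
    idealOfVars σ R = RingHom.ker (constantCoeff (σ := σ) (R := R)) := by
  ext p
  rw [← pow_one (idealOfVars σ R), mem_pow_idealOfVars_iff', RingHom.mem_ker, constantCoeff_eq]
  refine ⟨fun h ↦ h 0 (by simp), fun h x hx ↦ ?_⟩
  rw [Nat.lt_one_iff, Finsupp.degree_eq_zero_iff] at hx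
  exact hx ▸ h

theorem isMaximal_idealOfVars [Field R] : (idealOfVars σ R).IsMaximal := by
  rw [idealOfVars_eq_ker_constantCoeff]
  exact RingHom.ker_isMaximal_of_surjective _ fun r ↦ ⟨C r, constantCoeff_C σ r⟩

end MvPolynomial

theorem Ideal.colon_span_singleton_eq_of_le {R : Type*} [CommRing R] {J M : Ideal R} {u : R}
    (hM : M.IsMaximal) (hu : u ∉ J) (hle : M ≤ J.colon (Ideal.span {u})) :
    J.colon (Ideal.span {u}) = M := by
  refine (hM.eq_of_le (fun htop ↦ hu ?_) hle).symm
  simpa using Ideal.mem_colon_span_singleton.mp (htop ▸ Submodule.mem_top : (1 : R) ∈ _)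

theorem Ideal.mem_associatedPrimes_quotient_of_colon_eq {R : Type*} [CommRing R]
    {J P : Ideal R} {u : R} (hP : P.IsPrime) (h : J.colon (Ideal.span {u}) = P) :
    P ∈ associatedPrimes R (R ⧸ J) := by
  refine ⟨hP, Ideal.Quotient.mk J u, ?_⟩
  have hann : (R ∙ Ideal.Quotient.mk J u).annihilator = P := by
    rw [← h, ← Submodule.annihilator_map_mkQ_eq_colon, Submodule.map_span, Set.image_singleton]
    rfl
  rw [Submodule.bot_colon', hann, hP.radical]

section SquareFree

variable {K : Type*} [Field K] {n : ℕ}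

theorem degree_sum_single_one (S : Finset (Fin n)) :
    (∑ i ∈ S, Finsupp.single i 1).degree = S.card := by
  simp [map_sum, Finsupp.degree_single]

theorem sqMon_mem_pow_idealOfVars_iff (S : Finset (Fin n)) (d : ℕ) :
    sqMon K S ∈ idealOfVars (Fin n) K ^ d ↔ d ≤ S.card := by
  rw [sqMon_eq_monomial, monomial_mem_pow_idealOfVars_iff _ _ one_ne_zero,
    degree_sum_single_one]

theorem sqMon_mem_matIdeal {B : Finset (Finset (Fin n))} {S : Finset (Fin n)} (hS : S ∈ B) :
    sqMon K S ∈ matIdeal K B :=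
  Ideal.subset_span (Set.mem_image_of_mem _ hS)

theorem sqMon_mul_sqMon_mem_matIdeal_sq {B : Finset (Finset (Fin n))} {S T : Finset (Fin n)}
    (hS : S ∈ B) (hT : T ∈ B) : sqMon K S * sqMon K T ∈ matIdeal K B ^ 2 :=
  pow_two (matIdeal K B) ▸ Ideal.mul_mem_mul (sqMon_mem_matIdeal hS) (sqMon_mem_matIdeal hT)

theorem matIdeal_le_pow_idealOfVars {B : Finset (Finset (Fin n))} {d : ℕ}
    (hB : ∀ S ∈ B, d ≤ S.card) : matIdeal K B ≤ idealOfVars (Fin n) K ^ d := by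
  rw [matIdeal, Ideal.span_le]
  rintro _ ⟨S, hS, rfl⟩
  exact (sqMon_mem_pow_idealOfVars_iff S d).mpr (hB S hS)

theorem sqMon_notMem_pow_matIdeal {B : Finset (Finset (Fin n))} {d t : ℕ}
    (hB : ∀ S ∈ B, d ≤ S.card) {S : Finset (Fin n)} (hS : S.card < d * t) :
    sqMon K S ∉ matIdeal K B ^ t := fun h ↦ by
  have := Ideal.pow_right_mono (matIdeal_le_pow_idealOfVars (K := K) hB) t h
  rw [← pow_mul, sqMon_mem_pow_idealOfVars_iff] at this
  omega

end SquareFree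

-- Variables are indexed from `0`: `{0, 2}` stands for `x₁x₃`.
def exampleBases : Finset (Finset (Fin 6)) :=
  { {0, 2}, {0, 3}, {0, 4}, {0, 5}, {1, 2}, {1, 3}, {1, 4}, {1, 5},
    {2, 4}, {2, 5}, {3, 4}, {3, 5} }

theorem X_mul_sqMon_mem_exampleBases_sq (K : Type*) [Field K] (i : Fin 6) :
    X i * sqMon K {0, 2, 4} ∈ matIdeal K exampleBases ^ 2 := by
  obtain ⟨S, hS, T, hT, heq⟩ : ∃ S ∈ exampleBases, ∃ T ∈ exampleBases,
      X i * sqMon K {0, 2, 4} = sqMon K S * sqMon K T := by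
    fin_cases i <;> [
      refine ⟨{0, 2}, by decide, {0, 4}, by decide, ?_⟩;
      refine ⟨{0, 2}, by decide, {1, 4}, by decide, ?_⟩;
      refine ⟨{0, 2}, by decide, {2, 4}, by decide, ?_⟩;
      refine ⟨{0, 2}, by decide, {3, 4}, by decide, ?_⟩;
      refine ⟨{0, 4}, by decide, {2, 4}, by decide, ?_⟩;
      refine ⟨{0, 5}, by decide, {2, 4}, by decide, ?_⟩] <;>
    · simp only [sqMon, Finset.prod_insert, Finset.prod_singleton, Finset.mem_insert,
        Finset.mem_singleton, Fin.isValue, Fin.reduceEq, Fin.reduceFinMk, Fin.zero_eta,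
        Fin.mk_one, or_self, not_false_eq_true]
      ring
  exact heq ▸ sqMon_mul_sqMon_mem_matIdeal_sq hS hT

/-- in `K[x₁,…,x₆]`, for the matroidal ideal
`I = (x₁x₃, x₁x₄, x₁x₅, x₁x₆, x₂x₃, x₂x₄, x₂x₅, x₂x₆, x₃x₅, x₃x₆, x₄x₅, x₄x₆)`
(variables 0-indexed) one has `(I² : x₁x₃x₅) = (x₁, …, x₆)`; in particular the maximal
ideal is an associated prime of `R/I²`. -/
theorem stmt14 (K : Type*) [Field K] (I : Ideal (MvPolynomial (Fin 6) K))
    (hI : I = matIdeal K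
      ({ {0, 2}, {0, 3}, {0, 4}, {0, 5}, {1, 2}, {1, 3}, {1, 4}, {1, 5},
         {2, 4}, {2, 5}, {3, 4}, {3, 5} } : Finset (Finset (Fin 6)))) :
    Submodule.colon (I ^ 2) (Ideal.span {sqMon K ({0, 2, 4} : Finset (Fin 6))}) =
      maxIdeal K 6 ∧
    maxIdeal K 6 ∈ AssPow K I 2 := by
  change I = matIdeal K exampleBases at hI
  subst hI
  have hmax : (maxIdeal K 6).IsMaximal := isMaximal_idealOfVars
  have hunotin : sqMon K ({0, 2, 4} : Finset (Fin 6)) ∉ matIdeal K exampleBases ^ 2 :=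
    sqMon_notMem_pow_matIdeal (d := 2) (by decide) (by decide)
  have hcolon := Ideal.colon_span_singleton_eq_of_le hmax hunotin <| by
    rw [maxIdeal, Ideal.span_le]
    rintro _ ⟨i, rfl⟩
    exact Ideal.mem_colon_span_singleton.mpr (X_mul_sqMon_mem_exampleBases_sq K i)
  exact ⟨hcolon, Ideal.mem_associatedPrimes_quotient_of_colon_eq hmax.isPrime hcolon⟩
end

section
/- Let I be a matroidal ideal of degree d in R = K[x_1,...,x_n] with gcd(I) = 1, and let x_i be a variable in supp(I). Then (I : x_i) is a matroidal ideal of degree d − 1 in the variables of its support, and if |{u ∈ G(I) : x_i divides u}| < d then the number of variables occurring in (I : x_i) is at most d − 1. -/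
open MvPolynomial

/-- indicator finsupp of a finset -/
noncomputable def ind {n : ℕ} (S : Finset (Fin n)) : Fin n →₀ ℕ :=
  ∑ j ∈ S, Finsupp.single j 1

lemma ind_apply {n : ℕ} (S : Finset (Fin n)) (j : Fin n) :
    ind S j = if j ∈ S then 1 else 0 := by
  classical
  rw [ind, Finsupp.finset_sum_apply]
  simp [Finsupp.single_apply]

lemma ind_mono {n : ℕ} {S T : Finset (Fin n)} (h : S ⊆ T) : ind S ≤ ind T := by
  rw [Finsupp.le_def]
  intro j
  rw [ind_apply, ind_apply]
  by_cases hj : j ∈ S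
  · simp [hj, h hj]
  · simp [hj]

lemma sqMon_eq (K : Type*) [Field K] {n : ℕ} (S : Finset (Fin n)) :
    sqMon K S = monomial (ind S) (1 : K) := by
  classical
  induction S using Finset.induction with
  | empty => simp [sqMon, ind]
  | @insert a s ha ih =>
    have h1 : sqMon K (insert a s) = X a * sqMon K s := by
      rw [sqMon, sqMon, Finset.prod_insert ha]
    have h2 : ind (insert a s) = Finsupp.single a 1 + ind s := by
      rw [ind, ind, Finset.sum_insert ha]
    rw [h1, ih, h2, monomial_single_add, pow_one]

lemma matIdeal_eq (K : Type*) [Field K] {n : ℕ} (B : Finset (Finset (Fin n))) :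
    matIdeal K B = Ideal.span ((fun s => monomial s (1 : K)) '' (ind '' ↑B)) := by
  rw [matIdeal, Set.image_image]
  congr 1
  exact Set.image_congr (fun S _ => sqMon_eq K S)

lemma mem_matIdeal (K : Type*) [Field K] {n : ℕ} (B : Finset (Finset (Fin n)))
    (f : MvPolynomial (Fin n) K) :
    f ∈ matIdeal K B ↔ ∀ m ∈ f.support, ∃ S ∈ B, ind S ≤ m := by
  rw [matIdeal_eq, mem_ideal_span_monomial_image]
  constructor
  · intro h m hm
    obtain ⟨s, hs, hle⟩ := h m hm
    obtain ⟨S, hS, rfl⟩ := hs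
    exact ⟨S, hS, hle⟩
  · intro h m hm
    obtain ⟨S, hS, hle⟩ := h m hm
    exact ⟨ind S, ⟨S, hS, rfl⟩, hle⟩

/-- Basis exchange chain: from any basis containing `e`, reach a basis containing `e`
whose other elements all lie in `T`. -/
lemma exch_chain {n : ℕ} {B : Finset (Finset (Fin n))}
    (hB : ∀ S ∈ B, ∀ T ∈ B, ∀ i ∈ S, i ∉ T → ∃ j ∈ T, j ∉ S ∧ insert j (S.erase i) ∈ B)
    {T : Finset (Fin n)} (hT : T ∈ B) (e : Fin n) :
    ∀ k S, S ∈ B → e ∈ S → (S \ insert e T).card ≤ k →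
      ∃ S' ∈ B, e ∈ S' ∧ S'.erase e ⊆ T := by
  intro k
  induction k with
  | zero =>
    intro S hS he hc
    refine ⟨S, hS, he, ?_⟩
    intro x hx
    have hxS := Finset.mem_of_mem_erase hx
    have hxe := Finset.ne_of_mem_erase hx
    by_contra hxT
    have hmem : x ∈ S \ insert e T := by
      rw [Finset.mem_sdiff, Finset.mem_insert]
      exact ⟨hxS, by tauto⟩
    have := Finset.card_pos.2 ⟨x, hmem⟩
    omega
  | succ k ih =>
    intro S hS he hc
    by_cases hemp : S \ insert e T = ∅
    · exact ih S hS he (by simp [hemp])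
    · obtain ⟨x, hx⟩ := Finset.nonempty_iff_ne_empty.2 hemp
      rw [Finset.mem_sdiff, Finset.mem_insert] at hx
      have hxS : x ∈ S := hx.1
      have hxe : x ≠ e := fun h => hx.2 (Or.inl h)
      have hxT : x ∉ T := fun h => hx.2 (Or.inr h)
      obtain ⟨j, hjT, hjS, hS2⟩ := hB S hS T hT x hxS hxT
      have heS2 : e ∈ insert j (S.erase x) :=
        Finset.mem_insert_of_mem (Finset.mem_erase.2 ⟨fun h => hxe h.symm, he⟩)
      apply ih _ hS2 heS2
      have hsub : insert j (S.erase x) \ insert e T ⊆ (S \ insert e T).erase x := by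
        intro y hy
        rw [Finset.mem_sdiff] at hy
        rcases Finset.mem_insert.1 hy.1 with h | h
        · exact absurd (Finset.mem_insert_of_mem (h ▸ hjT)) hy.2
        · exact Finset.mem_erase.2 ⟨Finset.ne_of_mem_erase h,
            Finset.mem_sdiff.2 ⟨Finset.mem_of_mem_erase h, hy.2⟩⟩
      have h1 : x ∈ S \ insert e T := Finset.mem_sdiff.2 ⟨hxS, fun h => hx.2 (by
        rcases Finset.mem_insert.1 h with h | h
        · exact Or.inl h
        · exact Or.inr h)⟩
      have h2 := Finset.card_le_card hsub
      rw [Finset.card_erase_of_mem h1] at h2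
      have := Finset.card_pos.2 ⟨x, h1⟩
      omega

/-- for a matroidal ideal `I` of degree `d` with `gcd(I) = 1` and a variable
`x_i` in the support of `I`, the colon ideal `(I : x_i)` is a matroidal ideal of degree
`d - 1`; moreover if fewer than `d` minimal generators of `I` are divisible by `x_i`, then
the number of variables occurring in `(I : x_i)` is at most `d - 1`. -/
theorem stmt15 (K : Type*) [Field K] (n d : ℕ) (B : Finset (Finset (Fin n)))
    (hmat : IsMatroidalBases d B)
    (hgcd : ∀ j : Fin n, ∃ S ∈ B, j ∉ S)
    (i : Fin n) (hi : ∃ S ∈ B, i ∈ S) :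
    ∃ B' : Finset (Finset (Fin n)),
      IsMatroidalBases (d - 1) B' ∧
      Submodule.colon (matIdeal K B) (Ideal.span {(X i : MvPolynomial (Fin n) K)}) =
        matIdeal K B' ∧
      ((B.filter (fun S => i ∈ S)).card < d → (B'.sup id).card ≤ d - 1) := by
  classical
  obtain ⟨-, hcard, hexch⟩ := hmat
  obtain ⟨S₀, hS₀B, hiS₀⟩ := hi
  set B' : Finset (Finset (Fin n)) :=
    (B.filter (fun S => i ∈ S)).image (fun S => S.erase i) with hB'
  have memB' : ∀ S' : Finset (Fin n), S' ∈ B' ↔ ∃ S ∈ B, i ∈ S ∧ S' = S.erase i := by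
    intro S'
    simp only [hB', Finset.mem_image, Finset.mem_filter]
    constructor
    · rintro ⟨S, ⟨hS, hiS⟩, rfl⟩; exact ⟨S, hS, hiS, rfl⟩
    · rintro ⟨S, hS, hiS, rfl⟩; exact ⟨S, ⟨hS, hiS⟩, rfl⟩
  -- cardinalities in B'
  have hcard' : ∀ S' ∈ B', S'.card = d - 1 := by
    intro S' hS'
    obtain ⟨S, hS, hiS, rfl⟩ := (memB' S').1 hS'
    rw [Finset.card_erase_of_mem hiS, hcard S hS]
  -- B' is matroidal of degree d-1
  have hmat' : IsMatroidalBases (d - 1) B' := by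
    refine ⟨⟨S₀.erase i, (memB' _).2 ⟨S₀, hS₀B, hiS₀, rfl⟩⟩, hcard', ?_⟩
    intro S' hS' T' hT' k hkS' hkT'
    obtain ⟨S, hSB, hiS, rfl⟩ := (memB' S').1 hS'
    obtain ⟨T, hTB, hiT, rfl⟩ := (memB' T').1 hT'
    have hkS : k ∈ S := Finset.mem_of_mem_erase hkS'
    have hki : k ≠ i := Finset.ne_of_mem_erase hkS'
    have hkT : k ∉ T := fun h => hkT' (Finset.mem_erase.2 ⟨hki, h⟩)
    obtain ⟨j, hjT, hjS, hU⟩ := hexch S hSB T hTB k hkS hkT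
    have hji : j ≠ i := fun h => hjS (h ▸ hiS)
    refine ⟨j, Finset.mem_erase.2 ⟨hji, hjT⟩, fun h => hjS (Finset.mem_of_mem_erase h), ?_⟩
    have hik : i ≠ k := fun h => hki h.symm
    have heq : insert j ((S.erase i).erase k) = (insert j (S.erase k)).erase i := by
      rw [Finset.erase_insert_of_ne hji, Finset.erase_right_comm]
    rw [heq]
    exact (memB' _).2 ⟨insert j (S.erase k), hU,
      Finset.mem_insert_of_mem (Finset.mem_erase.2 ⟨hik, hiS⟩), rfl⟩
  refine ⟨B', hmat', ?_, ?_⟩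
  · -- colon equality
    apply le_antisymm
    · intro f hf
      rw [Ideal.mem_colon_span_singleton] at hf
      rw [mem_matIdeal] at hf ⊢
      intro m hm
      have hsupp : Finsupp.single i 1 + m ∈ (f * X i).support := by
        rw [MvPolynomial.mem_support_iff, mul_comm, coeff_X_mul]
        exact MvPolynomial.mem_support_iff.1 hm
      obtain ⟨S, hS, hle⟩ := hf _ hsupp
      rw [Finsupp.le_def] at hle
      by_cases hiS : i ∈ S
      · refine ⟨S.erase i, (memB' _).2 ⟨S, hS, hiS, rfl⟩, ?_⟩
        rw [Finsupp.le_def]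
        intro j
        by_cases hj : j = i
        · subst hj
          rw [ind_apply, if_neg (Finset.notMem_erase j S)]
          exact Nat.zero_le _
        · have h2 := hle j
          rw [Finsupp.add_apply, Finsupp.single_apply, if_neg (fun h : i = j => hj h.symm),
            zero_add] at h2
          exact le_trans (Finsupp.le_def.1 (ind_mono (Finset.erase_subset i S)) j) h2
      · have hleS : ind S ≤ m := by
          rw [Finsupp.le_def]
          intro j
          by_cases hj : j = i
          · subst hj; rw [ind_apply, if_neg hiS]; exact Nat.zero_le _
          · have := hle j
            rwa [Finsupp.add_apply, Finsupp.single_apply, if_neg (fun h : i = j => hj h.symm),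
              zero_add] at this
        obtain ⟨S₂, hS₂B, hiS₂, hsub⟩ :=
          exch_chain hexch hS i (S₀ \ insert i S).card S₀ hS₀B hiS₀ le_rfl
        exact ⟨S₂.erase i, (memB' _).2 ⟨S₂, hS₂B, hiS₂, rfl⟩,
          le_trans (ind_mono hsub) hleS⟩
    · rw [matIdeal, Ideal.span_le]
      rintro g ⟨S', hS', rfl⟩
      rw [SetLike.mem_coe, Ideal.mem_colon_span_singleton]
      obtain ⟨S, hSB, hiS, rfl⟩ := (memB' S').1 (Finset.mem_coe.1 hS')
      have : sqMon K (S.erase i) * X i = sqMon K S := by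
        rw [sqMon, sqMon, mul_comm, Finset.mul_prod_erase S _ hiS]
      rw [this]
      exact Ideal.subset_span ⟨S, Finset.mem_coe.2 hSB, rfl⟩
  · -- cardinality bound (the hypothesis is in fact contradictory)
    intro hlt
    exfalso
    have key : ∀ f : Fin n, ∃ C, f ∈ S₀ →
        C ∈ B ∧ i ∈ C ∧ (f = i → C = S₀) ∧ (f ≠ i → f ∉ C ∧ S₀.erase f ⊆ C) := by
      intro f
      by_cases hf : f ∈ S₀
      · by_cases hfi : f = i
        · exact ⟨S₀, fun _ => ⟨hS₀B, hiS₀, fun _ => rfl, fun h => absurd hfi h⟩⟩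
        · obtain ⟨T, hT, hfT⟩ := hgcd f
          obtain ⟨j, hjT, hjS, hC⟩ := hexch S₀ hS₀B T hT f hf hfT
          refine ⟨insert j (S₀.erase f), fun _ => ⟨hC,
            Finset.mem_insert_of_mem (Finset.mem_erase.2 ⟨fun h => hfi h.symm, hiS₀⟩),
            fun h => absurd h hfi, fun _ => ⟨?_, ?_⟩⟩⟩
          · intro h
            rcases Finset.mem_insert.1 h with h | h
            · exact hjS (h ▸ hf)
            · exact Finset.ne_of_mem_erase h rfl
          · exact fun x hx => Finset.mem_insert_of_mem hx
      · exact ⟨∅, fun h => absurd h hf⟩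
    choose φ hφ using key
    have hd : d ≤ (B.filter (fun S => i ∈ S)).card := by
      rw [← hcard S₀ hS₀B]
      apply Finset.card_le_card_of_injOn φ
      · intro a ha
        exact Finset.mem_filter.2 ⟨(hφ a ha).1, (hφ a ha).2.1⟩
      · intro a ha b hb hab
        by_contra hne
        by_cases hai : a = i
        · have hbi : b ≠ i := fun h => hne (hai.trans h.symm)
          have h1 : b ∉ φ b := ((hφ b hb).2.2.2 hbi).1
          have h2 : φ a = S₀ := (hφ a ha).2.2.1 hai
          exact h1 (hab ▸ h2 ▸ hb)
        · have h1 : a ∉ φ a := ((hφ a ha).2.2.2 hai).1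
          have h2 : a ∈ φ b := by
            by_cases hbi : b = i
            · rw [(hφ b hb).2.2.1 hbi]; exact ha
            · exact ((hφ b hb).2.2.2 hbi).2 (Finset.mem_erase.2 ⟨hne, ha⟩)
          exact h1 (hab ▸ h2)
    omega
end
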